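/- arXiv:1107.3852 — 5 statements merged into one kernel-verified Lean document; each statement's English description precedes it below -/
import Mathlib

section
/- For a positive integer j, the sequence C formally satisfies the recursion R(n) = R(n - R(n-j)) + R(n - j - R(n-j)): for every integer n, C(n) = C(n - C(n-j)) + C(n - j - C(n-j)). -/
/-!
Hermite's identity `∑_{i<m} ⌈(n - i)/m⌉ = n` splits, for `m = 2j`, into `C(n) + C(n - j) = n`.
Hence `C(n) = n - C(n - j)`, and `C(m) + C(m - j) = m` at `m = n - C(n - j) = C(n)` is the recursion.
-/

def C (j : ℕ) (n : ℤ) : ℤ := ∑ i ∈ Finset.range j, ⌈((n : ℚ) - i) / (2 * j)⌉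

open Finset

section Hermite

variable {K : Type*} [Field K] [LinearOrder K] [IsStrictOrderedRing K] [FloorRing K]

theorem sum_range_ceil_neg_div_eq_zero (m : ℕ) : ∑ i ∈ range m, ⌈-(i : K) / m⌉ = 0 := by
  refine sum_eq_zero fun i hi => Int.ceil_eq_zero_iff.mpr ⟨?_, ?_⟩
  · have him : (i : K) < m := by exact_mod_cast mem_range.mp hi
    rw [lt_div_iff₀ (by linarith [(Nat.cast_nonneg i : (0 : K) ≤ i)])]
    linarith
  · rw [neg_div]
    exact neg_nonpos.mpr (by positivity)

theorem sum_range_ceil_sub_div_add_one (m : ℕ) (hm : 0 < m) (n : ℤ) :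
    ∑ i ∈ range m, ⌈((n + 1 : ℤ) - i : K) / m⌉ = ∑ i ∈ range m, ⌈((n : K) - i) / m⌉ + 1 := by
  obtain ⟨k, rfl⟩ := Nat.exists_eq_add_one_of_ne_zero hm.ne'
  rw [sum_range_succ', sum_range_succ]
  have hshift : ((n + 1 : ℤ) - (0 : ℕ) : K) / (k + 1 : ℕ) = ((n : K) - k) / (k + 1 : ℕ) + 1 := by
    field_simp
    push_cast
    ring
  rw [hshift, Int.ceil_add_one]
  push_cast
  simp only [add_sub_add_right_eq_sub]
  ring

theorem sum_range_ceil_sub_div (m : ℕ) (hm : 0 < m) (n : ℤ) :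
    ∑ i ∈ range m, ⌈((n : K) - i) / m⌉ = n := by
  induction n using Int.induction_on with
  | zero => simpa only [Int.cast_zero, zero_sub] using sum_range_ceil_neg_div_eq_zero m
  | succ n ih => rw [sum_range_ceil_sub_div_add_one m hm, ih]
  | pred n ih =>
    have h := sum_range_ceil_sub_div_add_one (K := K) m hm (-n - 1)
    rw [sub_add_cancel, ih] at h
    linarith

end Hermite

theorem C_add_C_sub (j : ℕ) (hj : 0 < j) (n : ℤ) : C j n + C j (n - j) = n := by
  have h := sum_range_ceil_sub_div (K := ℚ) (2 * j) (by omega) n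
  push_cast at h
  rw [two_mul j, sum_range_add] at h
  have hshift : C j (n - j) = ∑ i ∈ range j, ⌈((n : ℚ) - (j + i : ℕ)) / (2 * j)⌉ :=
    sum_congr rfl fun i _ => by push_cast; ring_nf
  rw [hshift]
  exact h

theorem stmt6 (j : ℕ) (hj : 0 < j) (n : ℤ) :
    C j n = C j (n - C j (n - j)) + C j (n - j - C j (n - j)) := by
  have hn := C_add_C_sub j hj n
  have h := C_add_C_sub j hj (n - C j (n - j))
  rw [sub_right_comm] at h
  linarith
end

section
/- Let a : \mathbb{Z} \to \mathbb{Z} be a sequence. If there exist an integer c, a natural number k, and rationals q_1,...,q_k, r_1,...,r_k such that a(n) = c + \sum_{i=1}^k \lceil q_i n + r_i \rceil for all n, then the difference sequence d(n) = a(n+1) - a(n) is periodic, i.e., there exists a positive integer p with d(n+p) = d(n) for all n. -/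
/-!
If `p` is a common multiple of the denominators of the `q i`, then shifting `n` by `p` shifts
every `q i * n + r i` by the integer `q i * p`, so `a (n + p) = a n + s` for a constant `s`.
Taking forward differences kills the constant, so `p` is a period of `a (n + 1) - a n`.
-/

open Finset Function fwdDiff

theorem periodic_fwdDiff_of_add_const {M G : Type*} [AddCommMonoid M] [AddCommGroup G]
    {f : M → G} {p : M} {s : G} (h : ∀ x, f (x + p) = f x + s) (d : M) :
    Periodic (Δ_[d] f) p := by
  intro x
  simp only [fwdDiff, add_right_comm x p d, h]
  abel

theorem exists_sum_add_const {ι M G : Type*} [Fintype ι] [Add M] [AddCommMonoid G]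
    {f : ι → M → G} {p : M} (h : ∀ i, ∃ s, ∀ x, f i (x + p) = f i x + s) :
    ∃ s, ∀ x, ∑ i, f i (x + p) = ∑ i, f i x + s := by
  choose s hs using h
  exact ⟨∑ i, s i, fun x => by simp only [hs, sum_add_distrib]⟩

theorem Rat.exists_ceil_mul_add_add_eq (q r : ℚ) {p : ℤ} (hp : (q.den : ℤ) ∣ p) :
    ∃ s : ℤ, ∀ n : ℤ, ⌈q * ↑(n + p) + r⌉ = ⌈q * n + r⌉ + s := by
  obtain ⟨t, rfl⟩ := hp
  refine ⟨q.num * t, fun n => ?_⟩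
  rw [← Int.ceil_add_intCast]
  congr 1
  push_cast
  rw [← Rat.mul_den_eq_num]
  ring

theorem stmt8 (a : ℤ → ℤ)
    (h : ∃ (c : ℤ) (k : ℕ) (q r : Fin k → ℚ),
      ∀ n : ℤ, a n = c + ∑ i, ⌈q i * n + r i⌉) :
    ∃ p : ℕ, 0 < p ∧ ∀ n : ℤ, a (n + 1 + p) - a (n + p) = a (n + 1) - a n := by
  obtain ⟨c, k, q, r, ha⟩ := h
  set p : ℕ := ∏ i, (q i).den
  have hp : 0 < p := prod_pos fun i _ => (q i).pos
  have hterm (i : Fin k) : ∃ s : ℤ, ∀ n : ℤ, ⌈q i * ↑(n + p) + r i⌉ = ⌈q i * n + r i⌉ + s :=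
    Rat.exists_ceil_mul_add_add_eq _ _ (Int.natCast_dvd_natCast.2 (dvd_prod_of_mem _ (mem_univ i)))
  obtain ⟨s, hs⟩ := exists_sum_add_const (f := fun i (n : ℤ) => ⌈q i * n + r i⌉) hterm
  have hshift (n : ℤ) : a (n + p) = a n + s := by rw [ha, ha, hs, add_assoc]
  have hperiodic : Periodic (Δ_[1] a) p := periodic_fwdDiff_of_add_const hshift 1
  refine ⟨p, hp, fun n => ?_⟩
  simpa only [fwdDiff, add_right_comm n 1] using hperiodic n
end

section
/- Let j be a positive integer and let s_1, a_1, s_2, a_2, c be integers. Define h(n) = C(n - s_1 - C(n - a_1)) + C(n - s_2 - C(n - a_2)) - C(n). Then for all integers n, h(n) = C(n - (s_1 + cj) - C(n - (a_1 + 2cj))) + C(n - s_2 - C(n - a_2)) - C(n). (Transformation (a) preserves the difference function.) -/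
lemma C_sub_two_mul_mul (j : ℕ) (m c : ℤ) : C j (m - 2 * c * j) = C j m - c * j := by
  have summand_sub : ∀ i ∈ Finset.range j,
      ⌈(((m - 2 * c * j : ℤ) : ℚ) - i) / (2 * j)⌉ = ⌈((m : ℚ) - i) / (2 * j)⌉ - c := by
    intro i hi
    have hj : (j : ℚ) ≠ 0 := by
      exact_mod_cast (Nat.pos_of_ne_zero fun h => by simp [h] at hi).ne'
    rw [← Int.ceil_sub_intCast]
    congr 1
    push_cast
    field_simp
    ring
  rw [C, Finset.sum_congr rfl summand_sub, Finset.sum_sub_distrib]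
  simp [C, mul_comm]

theorem stmt11_general (j : ℕ) (s₁ a₁ s₂ a₂ c : ℤ) (n : ℤ) :
    C j (n - s₁ - C j (n - a₁)) + C j (n - s₂ - C j (n - a₂)) - C j n =
      C j (n - (s₁ + c * j) - C j (n - (a₁ + 2 * c * j))) +
        C j (n - s₂ - C j (n - a₂)) - C j n := by
  rw [show n - (a₁ + 2 * c * j) = n - a₁ - 2 * c * j by ring, C_sub_two_mul_mul]
  ring_nf

theorem stmt11 (j : ℕ) (hj : 0 < j) (s₁ a₁ s₂ a₂ c : ℤ) (n : ℤ) :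
    C j (n - s₁ - C j (n - a₁)) + C j (n - s₂ - C j (n - a₂)) - C j n =
      C j (n - (s₁ + c * j) - C j (n - (a₁ + 2 * c * j))) +
        C j (n - s₂ - C j (n - a₂)) - C j n :=
  stmt11_general j s₁ a₁ s₂ a₂ c n
end

section
/- Let j be a positive integer and let s_1, a_1, s_2, a_2, e be integers. Then for all integers n, C(n - s_1 - C(n - a_1)) + C(n - s_2 - C(n - a_2)) = C(n - (s_1 - 2ej) - C(n - a_1)) + C(n - (s_2 + 2ej) - C(n - a_2)). (Transformation (c) preserves the difference function.) -/
open Finset in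
/-- Shifting the argument by a multiple `2ej` of the period raises each of the `j` ceilings by `e`. -/
lemma C_add_two_mul_mul (j : ℕ) (m e : ℤ) : C j (m + 2 * e * j) = C j m + e * j := by
  have hsum : e * j = ∑ _i ∈ range j, e := by simp [mul_comm]
  rw [C, C, hsum, ← sum_add_distrib]
  refine sum_congr rfl fun i hi => ?_
  have hj : (j : ℚ) ≠ 0 := by
    exact_mod_cast ((Nat.zero_le i).trans_lt (mem_range.1 hi)).ne'
  rw [← Int.ceil_add_intCast]
  congr 1
  push_cast
  field_simp
  ring

theorem stmt12_general (j : ℕ) (s₁ a₁ s₂ a₂ e : ℤ) (n : ℤ) :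
    C j (n - s₁ - C j (n - a₁)) + C j (n - s₂ - C j (n - a₂)) =
      C j (n - (s₁ - 2 * e * j) - C j (n - a₁)) +
        C j (n - (s₂ + 2 * e * j) - C j (n - a₂)) := by
  rw [show n - (s₁ - 2 * e * j) - C j (n - a₁) = n - s₁ - C j (n - a₁) + 2 * e * j by ring,
    show n - (s₂ + 2 * e * j) - C j (n - a₂) = n - s₂ - C j (n - a₂) + 2 * (-e) * j by ring,
    C_add_two_mul_mul, C_add_two_mul_mul]
  ring

theorem stmt12 (j : ℕ) (hj : 0 < j) (s₁ a₁ s₂ a₂ e : ℤ) (n : ℤ) :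
    C j (n - s₁ - C j (n - a₁)) + C j (n - s₂ - C j (n - a₂)) =
      C j (n - (s₁ - 2 * e * j) - C j (n - a₁)) +
        C j (n - (s₂ + 2 * e * j) - C j (n - a₂)) :=
  stmt12_general j s₁ a₁ s₂ a₂ e n
end

section
/- Let j be a positive integer and s_1, a_1, s_2, a_2 integers. Define h(n, s_1, a_1, s_2, a_2) = C(n - s_1 - C(n - a_1)) + C(n - s_2 - C(n - a_2)) - C(n). If h(n, s_1, a_1, s_2, a_2) = 0 for all n with 0 \le n \le 4j - 1, then h(n, s_1, a_1, s_2, a_2) = 0 for all integers n. -/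
theorem Function.Periodic.eq_zero_of_forall_Ico {f : ℤ → ℤ} {c : ℤ} (hf : Function.Periodic f c)
    (hc : 0 < c) (hzero : ∀ n, 0 ≤ n → n < c → f n = 0) (n : ℤ) : f n = 0 := by
  rw [← hf.sub_int_mul_eq (n / c), Int.cast_id, mul_comm, ← Int.emod_def]
  exact hzero _ (Int.emod_nonneg n hc.ne') (Int.emod_lt_of_pos n hc)

theorem C_add_two_mul (j : ℕ) (n : ℤ) : C j (n + 2 * j) = C j n + j := by
  have step : ∀ i ∈ Finset.range j,
      ⌈(((n + 2 * j : ℤ) : ℚ) - i) / (2 * j)⌉ = ⌈((n : ℚ) - i) / (2 * j)⌉ + 1 := by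
    intro i hi
    have hj : (j : ℚ) ≠ 0 := by
      exact_mod_cast (Nat.zero_lt_of_lt (Finset.mem_range.mp hi)).ne'
    rw [← Int.ceil_add_one]
    congr 1
    field_simp
    push_cast
    ring
  rw [C, C, Finset.sum_congr rfl step, Finset.sum_add_distrib]
  simp

theorem C_add_four_mul (j : ℕ) (n : ℤ) : C j (n + 4 * j) = C j n + 2 * j := by
  rw [show n + 4 * j = n + 2 * j + 2 * j by ring, C_add_two_mul, C_add_two_mul]
  ring

theorem C_sub_C_add_four_mul (j : ℕ) (s a n : ℤ) :
    C j (n + 4 * j - s - C j (n + 4 * j - a)) = C j (n - s - C j (n - a)) + j := by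
  rw [show n + 4 * j - a = n - a + 4 * j by ring, C_add_four_mul,
    show n + 4 * j - s - (C j (n - a) + 2 * j) = n - s - C j (n - a) + 2 * j by ring,
    C_add_two_mul]

theorem periodic_C_sub_C_add_C_sub_C_sub_C (j : ℕ) (s₁ a₁ s₂ a₂ : ℤ) :
    Function.Periodic
      (fun n ↦ C j (n - s₁ - C j (n - a₁)) + C j (n - s₂ - C j (n - a₂)) - C j n) (4 * j) := by
  intro n
  simp only [C_sub_C_add_four_mul, C_add_four_mul]
  ring

theorem stmt16 (j : ℕ) (hj : 0 < j) (s₁ a₁ s₂ a₂ : ℤ)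
    (h : ∀ n : ℤ, 0 ≤ n → n ≤ 4 * j - 1 →
      C j (n - s₁ - C j (n - a₁)) + C j (n - s₂ - C j (n - a₂)) - C j n = 0) :
    ∀ n : ℤ, C j (n - s₁ - C j (n - a₁)) + C j (n - s₂ - C j (n - a₂)) - C j n = 0 :=
  (periodic_C_sub_C_add_C_sub_C_sub_C j s₁ a₁ s₂ a₂).eq_zero_of_forall_Ico (by positivity)
    fun n hn hlt ↦ h n hn (by omega)
end
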